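/- arXiv:2003.08249 — 5 statements merged into one kernel-verified Lean document; each statement's English description precedes it below -/
import Mathlib

section
/- Let x, u, y, v, z be words over an ordered alphabet Σ with |u| = |v|. Then, with respect to radix (length-lexicographic) order, either xuuyz < xuyvz, or xyvvz < xuyvz, or xuuyz = xuyvz = xyvvz. -/
/-- Radix (length-lexicographic) order on words over a linearly ordered alphabet. -/
def RadixLT {α : Type*} [LinearOrder α] (u v : List α) : Prop :=
  u.length < v.length ∨ (u.length = v.length ∧ List.Lex (· < ·) u v)

/-- `SWords L` is the set of length-wise lexicographically smallest words of `L`. -/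
def SWords {α : Type*} [LinearOrder α] (L : Set (List α)) : Set (List α) :=
  {u | u ∈ L ∧ ∀ v ∈ L, RadixLT v u → v.length < u.length}

/-- A language is thin if it contains at most one word of each length. -/
def Thin {α : Type*} (L : Set (List α)) : Prop :=
  ∀ n : ℕ, ∀ u ∈ L, ∀ v ∈ L, u.length = n → v.length = n → u = v

/-!
Compare `uy` and `yv`, which have the same length. If `uy < yv`, then replacing the factor `yv`
of `xuyvz = (xu)(yv)z` by `uy` gives the smaller word `xuuyz`; if `yv < uy`, replacing the factor
`uy` of `xuyvz = x(uy)(vz)` by `yv` gives the smaller word `xyvvz`; and if `uy = yv`, the same two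
substitutions show that all three words coincide.
-/

theorem List.Lex.append_of_length_eq {α : Type*} {r : α → α → Prop} :
    ∀ {s t : List α} (w w' : List α), s.length = t.length → List.Lex r s t →
      List.Lex r (s ++ w) (t ++ w')
  | [], _ :: _, _, _, hl, _ => by simp at hl
  | _ :: _, _ :: _, _, _, _, .rel hab => .rel hab
  | _ :: _, _ :: _, w, w', hl, .cons hst =>
    .cons (append_of_length_eq w w' (Nat.succ.inj hl) hst)

theorem radixLT_append_of_lex {α : Type*} [LinearOrder α] (p w : List α) {s t : List α}
    (hl : s.length = t.length) (hst : List.Lex (· < ·) s t) :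
    RadixLT (p ++ s ++ w) (p ++ t ++ w) :=
  .inr ⟨by simp [hl], by
    simpa only [List.append_assoc] using (hst.append_of_length_eq w w hl).append_left _ p⟩

theorem stmt0 {α : Type*} [LinearOrder α] (x u y v z : List α)
    (h : u.length = v.length) :
    RadixLT (x ++ u ++ u ++ y ++ z) (x ++ u ++ y ++ v ++ z) ∨
    RadixLT (x ++ y ++ v ++ v ++ z) (x ++ u ++ y ++ v ++ z) ∨
    (x ++ u ++ u ++ y ++ z = x ++ u ++ y ++ v ++ z ∧
      x ++ u ++ y ++ v ++ z = x ++ y ++ v ++ v ++ z) := by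
  have hl : (u ++ y).length = (y ++ v).length := by simp [h, Nat.add_comm]
  rcases trichotomous_of (List.Lex (· < ·)) (u ++ y) (y ++ v) with hlt | heq | hgt
  · left
    simpa only [List.append_assoc] using radixLT_append_of_lex (x ++ u) z hl hlt
  · right; right
    have hshift (w : List α) : u ++ (y ++ w) = y ++ (v ++ w) := by
      rw [← List.append_assoc, heq, List.append_assoc]
    simp [hshift]
  · right; left
    simpa only [List.append_assoc] using radixLT_append_of_lex x (v ++ z) hl.symm hgt
end

section
/- Let L ⊆ Σ* be a thin regular language recognized by a DFA with n states. Then the language L_≤ = {v : ∃ u ∈ L, |u| = |v|, v ≤ u} is recognized by an unambiguous NFA with 2n states. Concretely: given a DFA (Q, Σ, ·, q₀, F) for L, the NFA with states Q × {0,1}, initial state (q₀,0), final states F × {0,1}, and transitions (q,0) →a (q·a, 0), (q,0) →a (q·b, 1) for a < b, and (q,1) →a (q·b, 1) for all b, recognizes L_≤ and has at most one accepting run on every input. -/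
/-- The language of words that are at most some word of `L` of the same length. -/
def Lle {α : Type*} [LinearOrder α] (L : Set (List α)) : Set (List α) :=
  {v | ∃ u ∈ L, u.length = v.length ∧ (v = u ∨ List.Lex (· < ·) v u)}

/-- The NFA from the paper recognizing `Lle L`: the second component records whether we
have already output a strictly larger letter. -/
def succNFA {α σ : Type*} [LinearOrder α] (M : DFA α σ) : NFA α (σ × Bool) where
  step := fun p a =>
    if p.2 then {q | ∃ b : α, q = (M.step p.1 b, true)}
    else {(M.step p.1 a, false)} ∪ {q | ∃ b : α, a < b ∧ q = (M.step p.1 b, true)}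
  start := {(M.start, false)}
  accept := {q | q.1 ∈ M.accept}

/-- A run of an NFA on a word `w`, as a sequence of `w.length + 1` states. -/
def IsAcceptingRun {α σ : Type*} (N : NFA α σ) (w : List α)
    (r : Fin (w.length + 1) → σ) : Prop :=
  r 0 ∈ N.start ∧ r (Fin.last w.length) ∈ N.accept ∧
  ∀ j : Fin w.length, r j.succ ∈ N.step (r j.castSucc) (w.get j)

/-!
A run of `succNFA M` on `w` guesses, letter by letter, a word `u` with `|u| = |w|` and simulates
`M` on it; the flag records whether `u` has already left `w`, and the first letter where they
differ must be larger in `u`. Hence the states reachable from `(q, f)` on `w` are exactly the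
`(q·u, f || (u ≠ w))` for such `u` (with `w ≤ u` when `f = false`), which gives the language.
An accepting run is determined by its guessed word `u ∈ L`, and thinness leaves a single such
word of length `|w|`, so the run is unique.
-/

section

variable {α σ : Type*} [LinearOrder α] (M : DFA α σ)

theorem mem_succNFA_step {p p' : σ × Bool} {a : α} :
    p' ∈ (succNFA M).step p a ↔
      ∃ b, (p.2 = false → a ≤ b) ∧ p' = (M.step p.1 b, p.2 || decide (b ≠ a)) := by
  obtain ⟨q, _ | _⟩ := p
  · simp only [succNFA, Bool.false_eq_true, if_false, Set.mem_union, Set.mem_singleton_iff,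
      Set.mem_ofPred_eq, forall_const, Bool.false_or]
    constructor
    · rintro (rfl | ⟨b, hab, rfl⟩)
      · exact ⟨a, le_rfl, by simp⟩
      · exact ⟨b, hab.le, by simp [hab.ne']⟩
    · rintro ⟨b, hab, rfl⟩
      rcases hab.eq_or_lt with rfl | hab
      · simp
      · exact Or.inr ⟨b, hab, by simp [hab.ne']⟩
  · simp [succNFA]

theorem lex_guard_cons_iff {a b : α} {w u : List α} {f : Bool} :
    (f = false → a ≤ b) ∧ ((f || decide (b ≠ a)) = false → w = u ∨ List.Lex (· < ·) w u) ↔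
      (f = false → a :: w = b :: u ∨ List.Lex (· < ·) (a :: w) (b :: u)) := by
  cases f
  · simp only [List.cons_lex_cons_iff, List.cons.injEq, Bool.false_or, decide_eq_false_iff_not,
      not_not, forall_const]
    grind
  · simp

theorem mem_succNFA_evalFrom_singleton {w : List α} {q : σ} {f : Bool} {p : σ × Bool} :
    p ∈ (succNFA M).evalFrom {(q, f)} w ↔
      ∃ u : List α, u.length = w.length ∧ (f = false → w = u ∨ List.Lex (· < ·) w u) ∧
        p = (M.evalFrom q u, f || decide (u ≠ w)) := by
  induction w generalizing q f with
  | nil => simp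
  | cons a w ih =>
    simp only [NFA.evalFrom_cons, NFA.stepSet_singleton, NFA.mem_evalFrom_iff_exists,
      mem_succNFA_step, ih]
    constructor
    · rintro ⟨_, ⟨b, hab, rfl⟩, u, hu, hwu, rfl⟩
      exact ⟨b :: u, by simp [hu], lex_guard_cons_iff.1 ⟨hab, hwu⟩, by simp [Bool.or_assoc]⟩
    · rintro ⟨_ | ⟨b, u⟩, hu, hwu, rfl⟩
      · simp at hu
      · obtain ⟨hab, hwu⟩ := lex_guard_cons_iff.2 hwu
        exact ⟨_, ⟨b, hab, rfl⟩, u, by simpa using hu, hwu, by simp [Bool.or_assoc]⟩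

theorem mem_succNFA_accepts_iff {w : List α} : w ∈ (succNFA M).accepts ↔ w ∈ Lle M.accepts := by
  have hstart : (succNFA M).start = {(M.start, false)} := rfl
  simp only [NFA.mem_accepts, hstart, mem_succNFA_evalFrom_singleton]
  simp [Lle, succNFA]
  rfl

theorem succNFA_run_eq_of_steps {q : σ} {w : List α} {r : Fin (w.length + 1) → σ × Bool}
    {b : Fin w.length → α} (h0 : r 0 = (q, false))
    (hstep : ∀ j, r j.succ =
      (M.step (r j.castSucc).1 (b j), (r j.castSucc).2 || decide (b j ≠ w.get j)))
    (i : Fin (w.length + 1)) :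
    r i = (M.evalFrom q ((List.ofFn b).take i), decide ((List.ofFn b).take i ≠ w.take i)) := by
  induction i using Fin.induction with
  | zero => simpa using h0
  | succ j ih =>
    rw [hstep, ih, Fin.val_succ, Fin.val_castSucc, ← List.take_concat_get' w j j.isLt,
      ← List.take_concat_get' (List.ofFn b) j (by simp)]
    simp only [DFA.evalFrom_append_singleton, List.append_singleton_inj, List.getElem_ofFn,
      List.get_eq_getElem, ne_eq, not_and_or, Bool.decide_or]

theorem exists_mem_accepts_of_isAcceptingRun_succNFA {w : List α}
    {r : Fin (w.length + 1) → σ × Bool} (hr : IsAcceptingRun (succNFA M) w r) :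
    ∃ u ∈ M.accepts, u.length = w.length ∧
      ∀ i, r i = (M.evalFrom M.start (u.take i), decide (u.take i ≠ w.take i)) := by
  obtain ⟨hstart, haccept, hstep⟩ := hr
  choose b hb using fun j => (mem_succNFA_step M).1 (hstep j)
  have hrun := succNFA_run_eq_of_steps M hstart (fun j => (hb j).2)
  have hlen : (List.ofFn b).length = w.length := List.length_ofFn
  refine ⟨List.ofFn b, ?_, hlen, hrun⟩
  have hlast : (r (Fin.last _)).1 = M.evalFrom M.start (List.ofFn b) := by
    rw [hrun, Fin.val_last, List.take_of_length_le hlen.le]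
  change M.evalFrom M.start _ ∈ M.accept
  exact hlast ▸ haccept

theorem isAcceptingRun_succNFA_unique (hthin : Thin M.accepts) {w : List α}
    {r₁ r₂ : Fin (w.length + 1) → σ × Bool} (hr₁ : IsAcceptingRun (succNFA M) w r₁)
    (hr₂ : IsAcceptingRun (succNFA M) w r₂) : r₁ = r₂ := by
  obtain ⟨u₁, hu₁, hlen₁, hrun₁⟩ := exists_mem_accepts_of_isAcceptingRun_succNFA M hr₁
  obtain ⟨u₂, hu₂, hlen₂, hrun₂⟩ := exists_mem_accepts_of_isAcceptingRun_succNFA M hr₂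
  obtain rfl := hthin _ u₁ hu₁ u₂ hu₂ hlen₁ hlen₂
  funext i
  rw [hrun₁, hrun₂]

end

theorem stmt12 {α σ : Type*} [LinearOrder α] [Fintype σ] (M : DFA α σ)
    (hthin : Thin M.accepts) :
    (∀ w : List α, w ∈ (succNFA M).accepts ↔ w ∈ Lle M.accepts) ∧
    (∀ (w : List α) (r₁ r₂ : Fin (w.length + 1) → σ × Bool),
      IsAcceptingRun (succNFA M) w r₁ → IsAcceptingRun (succNFA M) w r₂ → r₁ = r₂) ∧
    Fintype.card (σ × Bool) = 2 * Fintype.card σ := by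
  refine ⟨fun _ => mem_succNFA_accepts_iff M,
    fun _ _ _ => isAcceptingRun_succNFA_unique M hthin, ?_⟩
  rw [Fintype.card_prod, Fintype.card_bool, mul_comm]
end

section
/- Let v be the K-successor of u where K is recognized by a DFA with n states. Then |u| ≤ |v| ≤ |u| + n. -/
/-- `v` is the `L`-successor of `u`: the least word of `L` strictly greater than `u`. -/
def IsSucc {α : Type*} [LinearOrder α] (L : Set (List α)) (u v : List α) : Prop :=
  v ∈ L ∧ RadixLT u v ∧ ∀ w ∈ L, RadixLT u w → ¬ RadixLT w v

theorem RadixLT.length_le {α : Type*} [LinearOrder α] {u v : List α} (h : RadixLT u v) :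
    u.length ≤ v.length :=
  h.elim le_of_lt fun h => h.1.le

theorem DFA.exists_mem_accepts_length_lt {α σ : Type*} [Fintype σ] (M : DFA α σ) {x : List α}
    (hx : x ∈ M.accepts) (hlen : Fintype.card σ ≤ x.length) :
    ∃ y ∈ M.accepts, y.length < x.length ∧ x.length ≤ y.length + Fintype.card σ := by
  obtain ⟨a, b, c, rfl, hab, hb, hpump⟩ := M.pumping_lemma hx hlen
  have hac : a ++ c ∈ M.accepts :=
    hpump ⟨a ++ [], ⟨a, rfl, [], Language.nil_mem_kstar _, rfl⟩, c, rfl, by simp⟩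
  have hb_pos : 0 < b.length := List.length_pos_iff.mpr hb
  refine ⟨a ++ c, hac, ?_, ?_⟩ <;> simp only [List.length_append] <;> omega

theorem stmt14 {α σ : Type*} [LinearOrder α] [Fintype σ] (M : DFA α σ)
    (u v : List α) (h : IsSucc M.accepts u v) :
    u.length ≤ v.length ∧ v.length ≤ u.length + Fintype.card σ := by
  obtain ⟨hv, huv, hmin⟩ := h
  refine ⟨huv.length_le, ?_⟩
  by_contra! hlong
  -- pumping `v` down yields an accepted word longer than `u` but shorter than `v`
  obtain ⟨w, hw, hwv, hvw⟩ := M.exists_mem_accepts_length_lt hv (by omega)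
  exact hmin w hw (Or.inl (by omega)) (Or.inl hwv)
end

section
/- Let p₁ < p₂ < ⋯ < p_k be the first k primes, p = p₁⋯p_k, and let L = 1* ∪ ⋃_{1≤i≤k} 1^i 0^{k-i+1} {1, 1², …, 1^{p_i - 1}} (1^{p_i})* over the ordered binary alphabet {0 < 1}. Then the word 1^{k+1+p} belongs to S(L). -/
/-- The prime-based language over the binary alphabet `{0 < 1}` (with `false = 0`,
`true = 1`): `1* ∪ ⋃_{1 ≤ i ≤ k} 1^i 0^(k-i+1) {1, …, 1^(pᵢ-1)} (1^(pᵢ))*`, where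
`pᵢ` is the `i`-th prime. -/
def primeLang (k : ℕ) : Set (List Bool) :=
  {w | ∃ m : ℕ, w = List.replicate m true} ∪
  {w | ∃ i, 1 ≤ i ∧ i ≤ k ∧ ∃ j, 1 ≤ j ∧ ¬ (Nat.nth Nat.Prime (i - 1) ∣ j) ∧
    w = List.replicate i true ++ List.replicate (k - i + 1) false ++ List.replicate j true}

theorem mem_SWords_of_unique_length {α : Type*} [LinearOrder α] {L : Set (List α)} {u : List α}
    (hu : u ∈ L) (huniq : ∀ v ∈ L, v.length = u.length → v = u) : u ∈ SWords L := by
  refine ⟨hu, fun v hv hlt => ?_⟩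
  rcases hlt with hshorter | ⟨hlen, hlex⟩
  · exact hshorter
  · obtain rfl := huniq v hv hlen
    exact absurd hlex (irrefl _)

theorem eq_replicate_true_of_mem_primeLang {k n : ℕ} {w : List Bool} (hw : w ∈ primeLang k)
    (hlen : w.length = k + 1 + n) (hdvd : ∀ i < k, Nat.nth Nat.Prime i ∣ n) :
    w = List.replicate (k + 1 + n) true := by
  rcases hw with ⟨m, rfl⟩ | ⟨i, hi1, hik, j, _, hndvd, rfl⟩
  · rw [List.length_replicate] at hlen
    rw [hlen]
  · have hj : j = n := by simp only [List.length_append, List.length_replicate] at hlen; omega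
    exact absurd (hj ▸ hdvd (i - 1) (by omega)) hndvd

theorem stmt15 (k : ℕ) :
    List.replicate (k + 1 + ∏ i ∈ Finset.range k, Nat.nth Nat.Prime i) true ∈
      SWords (primeLang k) := by
  refine mem_SWords_of_unique_length (Or.inl ⟨_, rfl⟩) fun v hv hlen => ?_
  refine eq_replicate_true_of_mem_primeLang hv (by simpa using hlen) fun i hi => ?_
  exact Finset.dvd_prod_of_mem _ (Finset.mem_range.mpr hi)
end

section
/- Let p₁, …, p_k be distinct primes, p = p₁⋯p_k, and L as in the prime-based construction: L = 1* ∪ ⋃_i 1^i 0^{k-i+1} {1,…,1^{p_i-1}}(1^{p_i})*. For every ℓ with 1 ≤ ℓ < p, the word 1^{k+1+p+ℓ} does NOT belong to S(L): there exists i with p_i ∤ ℓ, hence p_i ∤ p + ℓ, and then 1^i 0^{k-i+1} 1^{p+ℓ} is a word of L of the same length k+1+p+ℓ which is strictly smaller than 1^{k+1+p+ℓ} in radix order. -/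
/-! Since `ℓ < p₁ ⋯ p_k`, some `pᵢ` does not divide `ℓ`, nor therefore `p₁ ⋯ p_k + ℓ`. Then
`1^i 0^(k-i+1) 1^(p+ℓ)` lies in the language, has the length of `1^(k+1+p+ℓ)`, and is
lexicographically smaller since it has a `0` where the other word has its `(i+1)`-st `1`. -/

theorem prod_range_nth_prime_dvd {k n : ℕ} (h : ∀ i < k, Nat.nth Nat.Prime i ∣ n) :
    ∏ i ∈ Finset.range k, Nat.nth Nat.Prime i ∣ n := by
  have hdvd := Finset.prod_primes_dvd (s := (Finset.range k).image (Nat.nth Nat.Prime)) n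
    (by simp only [Finset.mem_image]; rintro _ ⟨i, -, rfl⟩; exact (Nat.prime_nth_prime i).prime)
    (by simp only [Finset.mem_image, Finset.mem_range]; rintro _ ⟨i, hi, rfl⟩; exact h i hi)
  rwa [Finset.prod_image fun a _ b _ hab => Nat.nth_injective Nat.infinite_setOfPred_prime hab]
    at hdvd

theorem exists_lt_not_nth_prime_dvd {k n : ℕ} (hn : 0 < n)
    (hlt : n < ∏ i ∈ Finset.range k, Nat.nth Nat.Prime i) :
    ∃ i < k, ¬ Nat.nth Nat.Prime i ∣ n := by
  by_contra! h
  exact hlt.not_ge (Nat.le_of_dvd hn (prod_range_nth_prime_dvd h))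

theorem List.lex_replicate_append_cons {α : Type*} [LT α] {a b : α} (hab : a < b)
    {i n : ℕ} (hin : i < n) (u : List α) :
    List.Lex (· < ·) (List.replicate i b ++ a :: u) (List.replicate n b) := by
  induction i generalizing n with
  | zero =>
    obtain ⟨m, rfl⟩ := Nat.exists_eq_add_of_lt hin
    exact List.Lex.rel hab
  | succ i ih =>
    obtain ⟨m, rfl⟩ := Nat.exists_eq_add_of_le' (Nat.one_le_of_lt hin)
    exact List.Lex.cons (ih (by omega))

theorem notMem_sWords_of_radixLT {α : Type*} [LinearOrder α] {L : Set (List α)}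
    {u v : List α} (hv : v ∈ L) (hvu : RadixLT v u) (hlen : v.length = u.length) :
    u ∉ SWords L :=
  fun hu => (hu.2 v hv hvu).ne hlen

theorem stmt16 (k ℓ : ℕ) (hℓ : 1 ≤ ℓ)
    (hℓ' : ℓ < ∏ i ∈ Finset.range k, Nat.nth Nat.Prime i) :
    List.replicate (k + 1 + (∏ i ∈ Finset.range k, Nat.nth Nat.Prime i) + ℓ) true ∉
      SWords (primeLang k) ∧
    ∃ i, 1 ≤ i ∧ i ≤ k ∧ ¬ (Nat.nth Nat.Prime (i - 1) ∣ ℓ) ∧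
      ¬ (Nat.nth Nat.Prime (i - 1) ∣ (∏ i ∈ Finset.range k, Nat.nth Nat.Prime i) + ℓ) ∧
      (List.replicate i true ++ List.replicate (k - i + 1) false ++
          List.replicate ((∏ i ∈ Finset.range k, Nat.nth Nat.Prime i) + ℓ) true) ∈
        primeLang k ∧
      RadixLT
        (List.replicate i true ++ List.replicate (k - i + 1) false ++
          List.replicate ((∏ i ∈ Finset.range k, Nat.nth Nat.Prime i) + ℓ) true)
        (List.replicate (k + 1 + (∏ i ∈ Finset.range k, Nat.nth Nat.Prime i) + ℓ) true) := by
  set P := ∏ i ∈ Finset.range k, Nat.nth Nat.Prime i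
  obtain ⟨i, hik, hℓi⟩ := exists_lt_not_nth_prime_dvd hℓ hℓ'
  have hPi : ¬ Nat.nth Nat.Prime i ∣ P + ℓ :=
    (Nat.dvd_add_right (Finset.dvd_prod_of_mem _ (Finset.mem_range.2 hik))).not.2 hℓi
  set w := List.replicate (i + 1) true ++ List.replicate (k - (i + 1) + 1) false ++
    List.replicate (P + ℓ) true with hw_def
  have hw : w ∈ primeLang k := Or.inr ⟨i + 1, by omega, hik, P + ℓ, by omega, hPi, rfl⟩
  have hlen : w.length = (List.replicate (k + 1 + P + ℓ) true).length := by
    simp only [hw_def, List.length_append, List.length_replicate]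
    omega
  have hlex : List.Lex (· < ·) w (List.replicate (k + 1 + P + ℓ) true) := by
    rw [hw_def, List.append_assoc, List.replicate_succ (n := k - (i + 1)),
      List.cons_append]
    exact List.lex_replicate_append_cons Bool.false_lt_true (by omega) _
  have hradix : RadixLT w (List.replicate (k + 1 + P + ℓ) true) := Or.inr ⟨hlen, hlex⟩
  exact ⟨notMem_sWords_of_radixLT hw hradix hlen, i + 1, by omega, hik, hℓi, hPi, hw, hradix⟩
end
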